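/- arXiv:2206.13331 — 2 statements merged into one kernel-verified Lean document; each statement's English description precedes it below -/
import Mathlib

section
/- Define F(s) = ζ(2m+1+s)^k ζ(1-s)^k / cos(πs/2) · (ρ/(2π)^k)^{-s} for a nonzero integer m, natural number k ≥ 1, and ρ > 0. Then for each integer j with 0 ≤ j ≤ m+1 (m ≥ 1), the residue of F at s = 1-2j equals (-1)^{km+k+j+1} 2^{2km+1} π^{2km+2k-1} B_{2m-2j+2}^k B_{2j}^k /((2m-2j+2)!^k (2j)!^k) · (ρ/(2π)^k)^{2j-1}. -/
/-!
At `s = 1 - 2j` the factor `cos (π s / 2)` has a simple zero with derivative `-(-1)^j π / 2`,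
while the rest of `F` is continuous there, since neither `2m + 1 + s = 2(m + 1 - j)` nor
`1 - s = 2j` is the pole of `ζ`. The residue is therefore the value of the remaining factor
divided by that derivative, and Euler's formula turns `ζ(2m + 2 - 2j) ζ(2j)` into Bernoulli
numbers.
-/

open Real Filter Topology Nat

theorem tendsto_sub_mul_div_of_hasDerivAt {𝕜 : Type*} [NontriviallyNormedField 𝕜]
    {f g : 𝕜 → 𝕜} {x d : 𝕜} (hf : HasDerivAt f d x) (hfx : f x = 0) (hd : d ≠ 0)
    (hg : ContinuousAt g x) :
    Tendsto (fun y => (y - x) * (g y / f y)) (𝓝[≠] x) (𝓝 (g x / d)) := by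
  have hslope : Tendsto (fun y => (y - x) / f y) (𝓝[≠] x) (𝓝 d⁻¹) :=
    ((hasDerivAt_iff_tendsto_slope.mp hf).inv₀ hd).congr fun y => by
      rw [slope_def_field, hfx, sub_zero, inv_div]
  refine ((hslope.mul (hg.tendsto.mono_left nhdsWithin_le_nhds)).congr fun y => ?_).trans ?_
  · ring
  · rw [inv_mul_eq_div]

namespace Complex

theorem cos_pi_mul_one_sub_two_mul_div_two (j : ℕ) : cos (π * (1 - 2 * j) / 2) = 0 := by
  rw [show (π : ℂ) * (1 - 2 * j) / 2 = π / 2 - (j * π : ℝ) by push_cast; ring,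
    cos_pi_div_two_sub, ← ofReal_sin, Real.sin_nat_mul_pi, ofReal_zero]

theorem hasDerivAt_cos_pi_mul_div_two_one_sub_two_mul (j : ℕ) :
    HasDerivAt (fun s : ℂ => cos (π * s / 2)) (-(-1) ^ j * (π / 2)) (1 - 2 * j) := by
  have hsin : sin (π * (1 - 2 * j) / 2) = (-1) ^ j := by
    rw [show (π : ℂ) * (1 - 2 * j) / 2 = π / 2 - (j * π : ℝ) by push_cast; ring,
      sin_pi_div_two_sub, ← ofReal_cos, Real.cos_nat_mul_pi]
    push_cast
    rfl
  simpa [hsin] using (((hasDerivAt_id (1 - 2 * j : ℂ)).const_mul (π : ℂ)).div_const 2).ccos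

end Complex

theorem riemannZeta_two_mul_nat_mul_riemannZeta_two_mul_nat {a j m : ℕ} (h : a + j = m + 1) :
    riemannZeta (2 * a) * riemannZeta (2 * j) =
      (-1) ^ (m + 1) * 2 ^ (2 * m) * (π : ℂ) ^ (2 * m + 2) *
        bernoulli (2 * a) * bernoulli (2 * j) / ((2 * a)! * (2 * j)!) := by
  have h2 : (2 : ℂ) ^ (2 * a - 1 : ℤ) * 2 ^ (2 * j - 1 : ℤ) = 2 ^ (2 * m) := by
    rw [← zpow_add₀ two_ne_zero, ← zpow_natCast]
    congr 1
    omega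
  have hπ : (π : ℂ) ^ (2 * a) * π ^ (2 * j) = π ^ (2 * m + 2) := by
    rw [← pow_add]
    congr 1
    omega
  have hsign : (-1 : ℂ) ^ (a + 1) * (-1) ^ (j + 1) = (-1) ^ (m + 1) := by
    rw [← pow_add, show a + 1 + (j + 1) = m + 1 + 2 by omega, pow_add]
    norm_num
  rw [riemannZeta_two_mul_nat', riemannZeta_two_mul_nat', ← hsign, ← h2, ← hπ]
  ring

theorem riemannZeta_two_mul_nat_pow_mul_pow_div {a j m k : ℕ} (h : a + j = m + 1) (hk : 1 ≤ k) :
    riemannZeta (2 * a) ^ k * riemannZeta (2 * j) ^ k / (-(-1) ^ j * (π / 2)) =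
      (-1) ^ (k * m + k + j + 1) * 2 ^ (2 * k * m + 1) * (π : ℂ) ^ (2 * k * m + 2 * k - 1) *
        (bernoulli (2 * a) : ℂ) ^ k * (bernoulli (2 * j) : ℂ) ^ k /
          (((2 * a)! : ℂ) ^ k * ((2 * j)! : ℂ) ^ k) := by
  obtain ⟨k, rfl⟩ := Nat.exists_eq_add_of_le' hk
  have hπ : (π : ℂ) ≠ 0 := Complex.ofReal_ne_zero.mpr pi_ne_zero
  have hsign : ((-1 : ℂ) ^ j)⁻¹ = (-1) ^ j := by rw [← inv_pow, inv_neg_one]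
  rw [← mul_pow, riemannZeta_two_mul_nat_mul_riemannZeta_two_mul_nat h,
    show 2 * (k + 1) * m + 2 * (k + 1) - 1 = 2 * (k + 1) * m + 2 * k + 1 by omega,
    div_pow, mul_pow ((2 * a)! : ℂ), div_eq_mul_inv, mul_inv, inv_neg, hsign, inv_div]
  field_simp
  ring

theorem residue_F_at_odd_points_general (m k : ℕ) (hk : 1 ≤ k) (ρ : ℝ) (hρ : 0 < ρ)
    (j : ℕ) (hj : j ≤ m + 1) :
    Tendsto
      (fun s : ℂ =>
        (s - (1 - 2 * j)) *
          (riemannZeta (2 * m + 1 + s) ^ k * riemannZeta (1 - s) ^ k /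
              Complex.cos (Real.pi * s / 2) *
            ((ρ : ℂ) / (2 * (Real.pi : ℂ)) ^ k) ^ (-s)))
      (𝓝[≠] (1 - 2 * j))
      (𝓝 ((-1) ^ (k * m + k + j + 1) * 2 ^ (2 * k * m + 1) *
          (Real.pi : ℂ) ^ (2 * k * m + 2 * k - 1) *
          (bernoulli (2 * m + 2 - 2 * j) : ℂ) ^ k * (bernoulli (2 * j) : ℂ) ^ k /
            ((Nat.factorial (2 * m + 2 - 2 * j) : ℂ) ^ k * (Nat.factorial (2 * j) : ℂ) ^ k) *
          ((ρ : ℂ) / (2 * (Real.pi : ℂ)) ^ k) ^ (2 * (j : ℤ) - 1))) := by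
  set c : ℂ := (ρ : ℂ) / (2 * (π : ℂ)) ^ k
  have hc : c ≠ 0 :=
    div_ne_zero (by exact_mod_cast hρ.ne') (pow_ne_zero _ (by simp [pi_ne_zero]))
  obtain ⟨a, haj⟩ : ∃ a, a + j = m + 1 := ⟨m + 1 - j, by omega⟩
  have hleft : 2 * (m : ℂ) + 1 + (1 - 2 * j) = 2 * a := by
    linear_combination (-2 : ℂ) * (by exact_mod_cast haj : (a : ℂ) + j = m + 1)
  have hright : 1 - (1 - 2 * (j : ℂ)) = 2 * j := by ring
  have hexp : -(1 - 2 * (j : ℂ)) = ((2 * j - 1 : ℤ) : ℂ) := by push_cast; ring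
  have hpole : ∀ n : ℕ, (2 * n : ℂ) ≠ 1 := fun n h => by norm_cast at h; omega
  have hg : ContinuousAt
      (fun s : ℂ => riemannZeta (2 * m + 1 + s) ^ k * riemannZeta (1 - s) ^ k * c ^ (-s))
      (1 - 2 * j) := by
    refine ((ContinuousAt.pow ?_ k).mul (ContinuousAt.pow ?_ k)).mul
      ((continuousAt_const_cpow hc).comp continuous_neg.continuousAt)
    · exact (differentiableAt_riemannZeta (hleft ▸ hpole a)).continuousAt.comp (by fun_prop)
    · exact (differentiableAt_riemannZeta (by rw [hright]; exact hpole j)).continuousAt.comp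
        (by fun_prop)
  have hres := tendsto_sub_mul_div_of_hasDerivAt
    (Complex.hasDerivAt_cos_pi_mul_div_two_one_sub_two_mul j)
    (Complex.cos_pi_mul_one_sub_two_mul_div_two j) (by simp [pi_ne_zero]) hg
  rw [hleft, hright, hexp, Complex.cpow_intCast, mul_div_right_comm,
    riemannZeta_two_mul_nat_pow_mul_pow_div haj hk] at hres
  rw [show 2 * m + 2 - 2 * j = 2 * a by omega]
  exact hres.congr fun s => by ring

theorem residue_F_at_odd_points (m k : ℕ) (hm : 1 ≤ m) (hk : 1 ≤ k) (ρ : ℝ) (hρ : 0 < ρ)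
    (j : ℕ) (hj : j ≤ m + 1) :
    Tendsto
      (fun s : ℂ =>
        (s - (1 - 2 * j)) *
          (riemannZeta (2 * m + 1 + s) ^ k * riemannZeta (1 - s) ^ k /
              Complex.cos (Real.pi * s / 2) *
            ((ρ : ℂ) / (2 * (Real.pi : ℂ)) ^ k) ^ (-s)))
      (𝓝[≠] (1 - 2 * j))
      (𝓝 ((-1) ^ (k * m + k + j + 1) * 2 ^ (2 * k * m + 1) *
          (Real.pi : ℂ) ^ (2 * k * m + 2 * k - 1) *
          (bernoulli (2 * m + 2 - 2 * j) : ℂ) ^ k * (bernoulli (2 * j) : ℂ) ^ k /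
            ((Nat.factorial (2 * m + 2 - 2 * j) : ℂ) ^ k * (Nat.factorial (2 * j) : ℂ) ^ k) *
          ((ρ : ℂ) / (2 * (Real.pi : ℂ)) ^ k) ^ (2 * (j : ℤ) - 1))) :=
  residue_F_at_odd_points_general m k hk ρ hρ j hj
end

section
/- For every odd positive integer m, the rational number Σ_{j=0}^{m+1} (-1)^{j+1} B_{2j} B_{2m+2-2j} /((2j)!(2m+2-2j)!) is nonzero. -/
/-!
Write `A k = B_{2k} / (2k)!`. Euler's formula says `A k = (-1)^(k+1) * 2 * p k` with
`p k = ∑_{a ≥ 1} (2πa)^(-2k)`, and the same identity holds at `k = 0` with `p 0 = ζ(0) = -1/2`.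
For `n = m + 1` even, the sum becomes `4 * (p n + ∑_{i < m} (-1)^i p (i+1) p (m-i))`.
Expanding each product of power sums as a double series over `(a, b)`, the inner alternating sum
`∑_{i < m} (-1)^i x^(i+1) y^(m-i)` equals `x y (x^m + y^m) / (x + y)`, which is nonnegative for
`x, y ≥ 0`. So the whole sum is at least `4 p n > 0`.
-/

open Nat Finset Real

section AlternatingPowerSums

variable {m : ℕ}

theorem alternating_sum_pow_mul_pow_mul_add {R : Type*} [CommRing R] (hm : Odd m) (x y : R) :
    (∑ i ∈ range m, (-1) ^ i * (x ^ (i + 1) * y ^ (m - i))) * (x + y) =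
      x * y * (x ^ m + y ^ m) := by
  have hgeom := geom_sum₂_mul (-x) y m
  rw [hm.neg_pow] at hgeom
  have hsum : ∑ i ∈ range m, (-1) ^ i * (x ^ (i + 1) * y ^ (m - i)) =
      x * y * ∑ i ∈ range m, (-x) ^ i * y ^ (m - 1 - i) := by
    rw [mul_sum]
    refine sum_congr rfl fun i hi => ?_
    rw [neg_pow, show m - i = m - 1 - i + 1 by have := mem_range.mp hi; omega]
    ring
  rw [hsum]
  linear_combination (-(x * y)) * hgeom

theorem alternating_sum_pow_mul_pow_nonneg (hm : Odd m) {x y : ℝ} (hx : 0 ≤ x) (hy : 0 ≤ y) :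
    0 ≤ ∑ i ∈ range m, (-1) ^ i * (x ^ (i + 1) * y ^ (m - i)) := by
  rcases hx.eq_or_lt with rfl | hx
  · simp
  refine nonneg_of_mul_nonneg_left ?_ (add_pos_of_pos_of_nonneg hx hy)
  rw [alternating_sum_pow_mul_pow_mul_add hm]
  positivity

theorem alternating_sum_powerSum_mul_nonneg (hm : Odd m) {ι : Type*} {x : ι → ℝ}
    (hx : ∀ a, 0 ≤ x a) {p : ℕ → ℝ} (hp : ∀ k, k ≠ 0 → HasSum (fun a => x a ^ k) (p k)) :
    0 ≤ ∑ i ∈ range m, (-1) ^ i * (p (i + 1) * p (m - i)) := by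
  have hprod : ∀ i ∈ range m,
      HasSum (fun q : ι × ι => (-1 : ℝ) ^ i * (x q.1 ^ (i + 1) * x q.2 ^ (m - i)))
        ((-1) ^ i * (p (i + 1) * p (m - i))) := by
    intro i hi
    have h₁ := hp (i + 1) (succ_ne_zero i)
    have h₂ := hp (m - i) (by have := mem_range.mp hi; omega)
    have := h₁.summable.mul_of_nonneg h₂.summable (fun a => pow_nonneg (hx a) _)
      (fun a => pow_nonneg (hx a) _)
    exact (h₁.mul h₂ this).mul_left _
  refine (hasSum_sum hprod).nonneg fun q => ?_
  exact alternating_sum_pow_mul_pow_nonneg hm (hx q.1) (hx q.2)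

end AlternatingPowerSums

/-- By Euler's formula this is `ζ(2k) / (2π)^(2k)` for `k ≠ 0`; at `k = 0` it is `ζ(0) = -1/2`. -/
noncomputable def zetaTwoMulDivTwoPiPow (k : ℕ) : ℚ :=
  (-1) ^ (k + 1) * bernoulli (2 * k) / (2 * (2 * k)!)

theorem hasSum_zetaTwoMulDivTwoPiPow {k : ℕ} (hk : k ≠ 0) :
    HasSum (fun a : ℕ => ((2 * π * a) ^ 2)⁻¹ ^ k) (zetaTwoMulDivTwoPiPow k : ℝ) := by
  have htwo : (2 : ℝ) ^ (2 * k) = 2 ^ (2 * k - 1) * 2 := by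
    rw [← pow_succ]; congr 1; omega
  have hvalue : (zetaTwoMulDivTwoPiPow k : ℝ) = ((2 * π) ^ (2 * k))⁻¹ *
      ((-1) ^ (k + 1) * 2 ^ (2 * k - 1) * π ^ (2 * k) * bernoulli (2 * k) / (2 * k)!) := by
    push_cast [zetaTwoMulDivTwoPiPow, mul_pow, htwo]
    field_simp
  have hterm (a : ℕ) :
      ((2 * π * a) ^ 2)⁻¹ ^ k = ((2 * π) ^ (2 * k))⁻¹ * (1 / (a : ℝ) ^ (2 * k)) := by
    rw [inv_pow, ← pow_mul, mul_pow, mul_inv, one_div, mul_comm 2 k]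
  simpa only [hvalue, hterm] using (hasSum_zeta_nat hk).mul_left ((2 * π) ^ (2 * k))⁻¹

theorem zetaTwoMulDivTwoPiPow_pos {k : ℕ} (hk : k ≠ 0) : 0 < zetaTwoMulDivTwoPiPow k := by
  have h := le_hasSum (hasSum_zetaTwoMulDivTwoPiPow hk) 1 fun _ _ => by positivity
  exact_mod_cast (show (0 : ℝ) < _ by positivity).trans_le h

theorem bernoulli_div_factorial_eq (k : ℕ) :
    bernoulli (2 * k) / (2 * k)! = (-1) ^ (k + 1) * 2 * zetaTwoMulDivTwoPiPow k := by
  have hsq : (-1 : ℚ) ^ (k + 1) * (-1) ^ (k + 1) = 1 := by rw [← mul_pow]; simp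
  simp only [zetaTwoMulDivTwoPiPow]
  field_simp
  linear_combination (-(bernoulli (2 * k) : ℚ)) * hsq

theorem bernoulli_sum_eq (m : ℕ) (hodd : Odd m) :
    ∑ j ∈ range (m + 2), (-1 : ℚ) ^ (j + 1) * bernoulli (2 * j) * bernoulli (2 * m + 2 - 2 * j) /
        ((2 * j)! * (2 * m + 2 - 2 * j)!) =
      4 * (zetaTwoMulDivTwoPiPow (m + 1) + ∑ i ∈ range m,
        (-1) ^ i * (zetaTwoMulDivTwoPiPow (i + 1) * zetaTwoMulDivTwoPiPow (m - i))) := by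
  set p := zetaTwoMulDivTwoPiPow
  have hterm : ∀ j ∈ range (m + 2), (-1 : ℚ) ^ (j + 1) * bernoulli (2 * j) *
      bernoulli (2 * m + 2 - 2 * j) / ((2 * j)! * (2 * m + 2 - 2 * j)!) =
        4 * ((-1) ^ (j + 1) * (p j * p (m + 1 - j))) := by
    intro j hj
    have hsign : (-1 : ℚ) ^ (j + 1) * (-1) ^ (m + 1 - j + 1) = 1 := by
      rw [← pow_add, show j + 1 + (m + 1 - j + 1) = m + 3 by have := mem_range.mp hj; omega]
      exact (hodd.add_odd (by decide)).neg_one_pow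
    rw [show 2 * m + 2 - 2 * j = 2 * (m + 1 - j) by omega, mul_assoc, mul_div_assoc,
      mul_div_mul_comm, bernoulli_div_factorial_eq, bernoulli_div_factorial_eq]
    linear_combination (4 * (-1) ^ (j + 1) * p j * p (m + 1 - j)) * hsign
  have hp0 : p 0 = -1 / 2 := by simp [p, zetaTwoMulDivTwoPiPow]
  have hlast : (-1 : ℚ) ^ (m + 1 + 1) = -1 := hodd.add_one.add_one.neg_one_pow
  have hmid : ∀ i ∈ range m, (-1 : ℚ) ^ (i + 1 + 1) * (p (i + 1) * p (m + 1 - (i + 1))) =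
      (-1) ^ i * (p (i + 1) * p (m - i)) := by
    intro i _
    rw [Nat.add_sub_add_right, pow_succ, pow_succ]
    ring
  rw [sum_congr rfl hterm, ← mul_sum, sum_range_succ, sum_range_succ', sum_congr rfl hmid,
    Nat.sub_self, Nat.sub_zero, hlast, hp0]
  ring

theorem bernoulli_sum_ne_zero_general (m : ℕ) (hodd : Odd m) :
    (∑ j ∈ Finset.range (m + 2),
        (-1 : ℚ) ^ (j + 1) * bernoulli (2 * j) * bernoulli (2 * m + 2 - 2 * j) /
          ((Nat.factorial (2 * j) : ℚ) * (Nat.factorial (2 * m + 2 - 2 * j) : ℚ))) ≠ 0 := by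
  set p := zetaTwoMulDivTwoPiPow
  have hmid : 0 ≤ ∑ i ∈ range m, (-1 : ℝ) ^ i * ((p (i + 1) : ℝ) * p (m - i)) :=
    alternating_sum_powerSum_mul_nonneg hodd (x := fun a : ℕ => ((2 * π * a) ^ 2)⁻¹)
      (fun _ => by positivity) (fun _ hk => hasSum_zetaTwoMulDivTwoPiPow hk)
  have hpos : 0 < p (m + 1) + ∑ i ∈ range m, (-1) ^ i * (p (i + 1) * p (m - i)) := by
    have hend : (0 : ℝ) < p (m + 1) := by
      exact_mod_cast zetaTwoMulDivTwoPiPow_pos (succ_ne_zero m)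
    exact_mod_cast add_pos_of_pos_of_nonneg hend hmid
  rw [bernoulli_sum_eq m hodd]
  exact mul_ne_zero four_ne_zero hpos.ne'

theorem bernoulli_sum_ne_zero (m : ℕ) (hm : 0 < m) (hodd : Odd m) :
    (∑ j ∈ Finset.range (m + 2),
        (-1 : ℚ) ^ (j + 1) * bernoulli (2 * j) * bernoulli (2 * m + 2 - 2 * j) /
          ((Nat.factorial (2 * j) : ℚ) * (Nat.factorial (2 * m + 2 - 2 * j) : ℚ))) ≠ 0 :=
  bernoulli_sum_ne_zero_general m hodd
end
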